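/- arXiv:2103.04839 — 3 statements merged into one kernel-verified Lean document; each statement's English description precedes it below -/
import Mathlib

section
/- For p>0 and α,β ∈ ℝ and T>0, the integral ∫_0^T ∫_0^1 |t^α x^β e^{-x²/(4t)}|^p dx dt is finite if and only if pβ > -1 and p(2α+β) > -3. -/
/-!
After the substitution `a = pα`, `b = pβ`, `c = p/4` the integrand is
`t ^ a * x ^ b * exp (-(c / t) * x ^ 2)`, and by Tonelli it is integrable iff almost every slice
`x ↦ x ^ b * exp (-(c / t) * x ^ 2)` is integrable on `(0, 1)` (i.e. `b > -1`, the Gaussian factor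
being bounded above and below there) and `t ↦ t ^ a * ∫₀¹ x ^ b * exp (-(c / t) * x ^ 2) dx` is
integrable on `(0, T)`. The inner integral is of exact order `t ^ ((b + 1) / 2)` for small `t`:
it is at most the full Gaussian moment over `(0, ∞)`, and at least its part over `(0, √t)`, where
the exponential is at least `exp (-c)`. So the second condition reads `a + (b + 1) / 2 > -1`.
-/

open MeasureTheory Real Set

theorem integrableOn_Ioo_rpow_mul_exp_neg_mul_sq_iff {b : ℝ} (c : ℝ) :
    IntegrableOn (fun x : ℝ => x ^ b * exp (-c * x ^ 2)) (Ioo 0 1) ↔ -1 < b := by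
  rw [← intervalIntegral.integrableOn_Ioo_rpow_iff one_pos]
  refine ⟨fun h => ?_, fun h => ?_⟩
  · refine (h.mul_continuousOn_of_subset (g' := fun x => exp (c * x ^ 2)) (by fun_prop)
      measurableSet_Ioo isCompact_Icc Ioo_subset_Icc_self).congr_fun (fun x _ => ?_)
      measurableSet_Ioo
    simp [mul_assoc, ← exp_add]
  · exact h.mul_continuousOn_of_subset (by fun_prop) measurableSet_Ioo isCompact_Icc
      Ioo_subset_Icc_self

theorem integral_Ioo_rpow_mul_exp_neg_div_mul_sq_le {b c t : ℝ} (hb : -1 < b) (hc : 0 < c)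
    (ht : 0 < t) :
    ∫ x in Ioo 0 1, x ^ b * exp (-(c / t) * x ^ 2)
      ≤ c ^ (-(b + 1) / 2) * (1 / 2) * Gamma ((b + 1) / 2) * t ^ ((b + 1) / 2) := by
  have hct : 0 < c / t := div_pos hc ht
  calc ∫ x in Ioo 0 1, x ^ b * exp (-(c / t) * x ^ 2)
      ≤ ∫ x in Ioi 0, x ^ b * exp (-(c / t) * x ^ 2) := by
        refine setIntegral_mono_set (integrableOn_rpow_mul_exp_neg_mul_sq hct hb) ?_
          Ioo_subset_Ioi_self.eventuallyLE
        filter_upwards [ae_restrict_mem measurableSet_Ioi] with x hx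
        exact mul_nonneg (rpow_nonneg hx.le _) (exp_nonneg _)
    _ = (c / t) ^ (-(b + 1) / 2) * (1 / 2) * Gamma ((b + 1) / 2) := by
        simp_rw [← rpow_two]
        exact integral_rpow_mul_exp_neg_mul_rpow two_pos hb hct
    _ = _ := by
        rw [div_rpow hc.le ht.le, div_eq_mul_inv, ← rpow_neg ht.le, neg_div, neg_neg]
        ring

theorem le_integral_Ioo_rpow_mul_exp_neg_div_mul_sq {b c t : ℝ} (hb : -1 < b) (hc : 0 ≤ c)
    (ht : 0 < t) (ht1 : t ≤ 1) :
    exp (-c) / (b + 1) * t ^ ((b + 1) / 2) ≤ ∫ x in Ioo 0 1, x ^ b * exp (-(c / t) * x ^ 2) := by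
  have hs : 0 < √t := sqrt_pos.2 ht
  have hs1 : √t ≤ 1 := sqrt_le_one.2 ht1
  calc exp (-c) / (b + 1) * t ^ ((b + 1) / 2)
      = ∫ x in Ioo 0 √t, x ^ b * exp (-c) := by
        rw [integral_mul_const, ← integral_Ioc_eq_integral_Ioo,
          ← intervalIntegral.integral_of_le hs.le, integral_rpow (Or.inl hb),
          zero_rpow (by linarith), sub_zero, sqrt_eq_rpow, ← rpow_mul ht.le]
        ring_nf
    _ ≤ ∫ x in Ioo 0 √t, x ^ b * exp (-(c / t) * x ^ 2) := by
        refine setIntegral_mono_on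
          (((intervalIntegral.integrableOn_Ioo_rpow_iff hs).2 hb).mul_const _)
          (((integrableOn_Ioo_rpow_mul_exp_neg_mul_sq_iff _).2 hb).mono_set
            (Ioo_subset_Ioo_right hs1)) measurableSet_Ioo fun x hx => ?_
        have hx2 : x ^ 2 ≤ t := ((lt_sqrt hx.1.le).1 hx.2).le
        have : c / t * x ^ 2 ≤ c := by
          rw [div_mul_eq_mul_div, div_le_iff₀ ht]
          exact mul_le_mul_of_nonneg_left hx2 hc
        have := rpow_nonneg hx.1.le b
        gcongr
        linarith
    _ ≤ ∫ x in Ioo 0 1, x ^ b * exp (-(c / t) * x ^ 2) := by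
        refine setIntegral_mono_set ((integrableOn_Ioo_rpow_mul_exp_neg_mul_sq_iff _).2 hb) ?_
          (Ioo_subset_Ioo_right hs1).eventuallyLE
        filter_upwards [ae_restrict_mem measurableSet_Ioo] with x hx
        exact mul_nonneg (rpow_nonneg hx.1.le _) (exp_nonneg _)

theorem integrableOn_Ioo_rpow_mul_integral_rpow_mul_exp_iff {a b c T : ℝ} (hb : -1 < b)
    (hc : 0 < c) (hT : 0 < T) :
    IntegrableOn (fun t => t ^ a * ∫ x in Ioo 0 1, x ^ b * exp (-(c / t) * x ^ 2)) (Ioo 0 T)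
      ↔ -1 < a + (b + 1) / 2 := by
  set K := c ^ (-(b + 1) / 2) * (1 / 2) * Gamma ((b + 1) / 2)
  set C := exp (-c) / (b + 1)
  have hC : 0 < C := div_pos (exp_pos _) (by linarith)
  have hT' : 0 < min T 1 := lt_min hT one_pos
  constructor
  · intro h
    rw [← intervalIntegral.integrableOn_Ioo_rpow_iff hT']
    refine Integrable.mono' ((h.mono_set (Ioo_subset_Ioo_right (min_le_left T 1))).const_mul C⁻¹)
      (by fun_prop) ?_
    filter_upwards [ae_restrict_mem measurableSet_Ioo] with t ht
    have ht0 := ht.1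
    have hlow := le_integral_Ioo_rpow_mul_exp_neg_div_mul_sq hb hc.le ht0
      (ht.2.le.trans (min_le_right T 1))
    rw [norm_of_nonneg (rpow_nonneg ht0.le _), rpow_add ht0, le_inv_mul_iff₀ hC]
    calc C * (t ^ a * t ^ ((b + 1) / 2)) = t ^ a * (C * t ^ ((b + 1) / 2)) := by ring
      _ ≤ _ := by gcongr
  · intro he
    have hmeas : StronglyMeasurable fun t => ∫ x in Ioo 0 1, x ^ b * exp (-(c / t) * x ^ 2) :=
      (Measurable.stronglyMeasurable (by fun_prop :
        Measurable fun q : ℝ × ℝ => q.2 ^ b * exp (-(c / q.1) * q.2 ^ 2))).integral_prod_right'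
    refine Integrable.mono' (((intervalIntegral.integrableOn_Ioo_rpow_iff hT).2 he).const_mul K)
      ((Measurable.aestronglyMeasurable (by fun_prop)).mul hmeas.aestronglyMeasurable) ?_
    filter_upwards [ae_restrict_mem measurableSet_Ioo] with t ht
    have ht0 := ht.1
    have hI : 0 ≤ ∫ x in Ioo 0 1, x ^ b * exp (-(c / t) * x ^ 2) :=
      setIntegral_nonneg measurableSet_Ioo fun x hx =>
        mul_nonneg (rpow_nonneg hx.1.le _) (exp_nonneg _)
    rw [norm_of_nonneg (mul_nonneg (rpow_nonneg ht0.le _) hI), rpow_add ht0]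
    calc t ^ a * ∫ x in Ioo 0 1, x ^ b * exp (-(c / t) * x ^ 2)
        ≤ t ^ a * (K * t ^ ((b + 1) / 2)) := by
          gcongr
          exact integral_Ioo_rpow_mul_exp_neg_div_mul_sq_le hb hc ht0
      _ = K * (t ^ a * t ^ ((b + 1) / 2)) := by ring

theorem integrableOn_rpow_mul_rpow_mul_exp_neg_div_mul_sq_iff {a b c T : ℝ} (hc : 0 < c)
    (hT : 0 < T) :
    IntegrableOn (fun q : ℝ × ℝ => q.1 ^ a * (q.2 ^ b * exp (-(c / q.1) * q.2 ^ 2)))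
      (Ioo 0 T ×ˢ Ioo 0 1) ↔ -1 < b ∧ -1 < a + (b + 1) / 2 := by
  have hslice (t : ℝ) (ht : 0 < t) :
      Integrable (fun x => t ^ a * (x ^ b * exp (-(c / t) * x ^ 2))) (volume.restrict (Ioo 0 1))
        ↔ -1 < b :=
    (integrable_const_mul_iff (rpow_pos_of_pos ht a).ne'.isUnit _).trans
      (integrableOn_Ioo_rpow_mul_exp_neg_mul_sq_iff _)
  have hnorm (t : ℝ) (ht : 0 < t) :
      ∫ x in Ioo 0 1, ‖t ^ a * (x ^ b * exp (-(c / t) * x ^ 2))‖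
        = t ^ a * ∫ x in Ioo 0 1, x ^ b * exp (-(c / t) * x ^ 2) := by
    rw [← integral_const_mul]
    refine setIntegral_congr_fun measurableSet_Ioo fun x hx => norm_of_nonneg ?_
    exact mul_nonneg (rpow_nonneg ht.le _) (mul_nonneg (rpow_nonneg hx.1.le _) (exp_nonneg _))
  have : (ae (volume.restrict (Ioo 0 T))).NeBot := ae_restrict_neBot.2 (by simp [hT])
  rw [IntegrableOn, Measure.volume_eq_prod, ← Measure.prod_restrict,
    integrable_prod_iff (Measurable.aestronglyMeasurable (by fun_prop))]
  have hslices : (∀ᵐ t ∂volume.restrict (Ioo 0 T), Integrable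
      (fun x => t ^ a * (x ^ b * exp (-(c / t) * x ^ 2))) (volume.restrict (Ioo 0 1)))
        ↔ -1 < b := by
    refine Iff.trans (Filter.eventually_congr ?_) Filter.eventually_const
    filter_upwards [ae_restrict_mem measurableSet_Ioo] with t ht using hslice t ht.1
  dsimp only
  rw [hslices]
  refine and_congr_right fun hb => ?_
  rw [← integrableOn_Ioo_rpow_mul_integral_rpow_mul_exp_iff hb hc hT]
  exact integrableOn_congr_fun (fun t ht => hnorm t ht.1) measurableSet_Ioo

theorem abs_rpow_mul_rpow_mul_exp_rpow {t x : ℝ} (ht : 0 < t) (hx : 0 < x) (α β p : ℝ) :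
    |t ^ α * x ^ β * exp (-x ^ 2 / (4 * t))| ^ p
      = t ^ (p * α) * (x ^ (p * β) * exp (-(p / 4 / t) * x ^ 2)) := by
  rw [abs_of_pos (by positivity), mul_assoc, mul_rpow (by positivity) (by positivity),
    mul_rpow (by positivity) (by positivity), ← rpow_mul ht.le, ← rpow_mul hx.le, ← exp_mul]
  ring_nf

theorem stmt0 (p α β T : ℝ) (hp : 0 < p) (hT : 0 < T) :
    IntegrableOn
      (fun q : ℝ × ℝ => |q.1 ^ α * q.2 ^ β * Real.exp (-q.2 ^ 2 / (4 * q.1))| ^ p)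
      (Ioo 0 T ×ˢ Ioo 0 1) volume
    ↔ p * β > -1 ∧ p * (2 * α + β) > -3 := by
  rw [integrableOn_congr_fun (fun q hq => abs_rpow_mul_rpow_mul_exp_rpow hq.1.1 hq.2.1 α β p)
      (measurableSet_Ioo.prod measurableSet_Ioo),
    integrableOn_rpow_mul_rpow_mul_exp_neg_div_mul_sq_iff (by positivity) hT]
  constructor <;> rintro ⟨h₁, h₂⟩ <;> constructor <;> linarith
end

section
/- The function (t,x) ↦ t · ∂_x² u_H(t,x) = (1/(2√π)) x t^{-1/2} e^{-x²/(4t)} is square integrable on (0,T)×(0,1), and likewise (t,x) ↦ x · ∂_x² u_H(t,x) = (1/(2√π)) x² t^{-3/2} e^{-x²/(4t)} is square integrable on (0,T)×(0,1). -/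
/-! With `v = x² / (2t)`, the two squared functions are `2c² · v e^{-v}` and
`2^{9/4} c² · t^{-3/4} x^{-1/2} · v^{9/4} e^{-v}`, where `c = 1 / (2√π)`. Since `v^s e^{-v}` is bounded
on `v ≥ 0` for every `s > 0`, the first is bounded and the second is dominated by a multiple of
`t^{-3/4} x^{-1/2}`, which is integrable on the rectangle. Any exponent `s ∈ (2, 5/2)` in place
of `9/4` would do: it must make both `t^{s-3}` and `x^{4-2s}` integrable near `0`. -/

open MeasureTheory Real Set

theorem rpow_mul_exp_neg_le {s u : ℝ} (hs : 0 < s) (hu : 0 ≤ u) :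
    u ^ s * exp (-u) ≤ s ^ s * exp (-s) := by
  have hlin : u / s ≤ exp (u / s - 1) := by linarith [add_one_le_exp (u / s - 1)]
  have hpow : (u / s) ^ s ≤ exp (u - s) := by
    calc (u / s) ^ s ≤ exp (u / s - 1) ^ s := by gcongr
      _ = exp (u - s) := by rw [← exp_mul]; field_simp
  rw [div_rpow hu hs.le, div_le_iff₀ (by positivity)] at hpow
  calc u ^ s * exp (-u) ≤ exp (u - s) * s ^ s * exp (-u) := by gcongr
    _ = s ^ s * exp (-s) := by rw [mul_comm (exp _), mul_assoc, ← exp_add]; ring_nf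

theorem integrableOn_rpow_mul_rpow_Ioo_prod_Ioo {a b T X : ℝ} (ha : -1 < a) (hb : -1 < b)
    (hT : 0 < T) (hX : 0 < X) :
    IntegrableOn (fun q : ℝ × ℝ => q.1 ^ a * q.2 ^ b) (Ioo 0 T ×ˢ Ioo 0 X) := by
  have h := ((intervalIntegral.integrableOn_Ioo_rpow_iff hT).mpr ha).mul_prod
    ((intervalIntegral.integrableOn_Ioo_rpow_iff hX).mpr hb)
  rwa [Measure.prod_restrict, ← Measure.volume_eq_prod] at h

theorem sq_exp_neg_sq_div_four_mul (x t : ℝ) :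
    exp (-x ^ 2 / (4 * t)) ^ 2 = exp (-(x ^ 2 / (2 * t))) := by
  rw [← exp_nat_mul]; ring_nf

theorem pow_four_mul_rpow_neg_three {t x : ℝ} (ht : 0 < t) (hx : 0 < x) :
    x ^ 4 * t ^ (-3 : ℝ) = 2 ^ ((9 : ℝ) / 4) * (t ^ (-(3 : ℝ) / 4) * x ^ (-(1 : ℝ) / 2)) *
      (x ^ 2 / (2 * t)) ^ ((9 : ℝ) / 4) := by
  have ht' : t ^ (-(3 : ℝ) / 4) = t ^ (-3 : ℝ) * t ^ ((9 : ℝ) / 4) := by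
    rw [← rpow_add ht]; norm_num
  have hx' : x ^ (-(1 : ℝ) / 2) * x ^ ((2 : ℕ) * ((9 : ℝ) / 4)) = x ^ 4 := by
    rw [← rpow_add hx, ← rpow_natCast]; norm_num
  rw [div_rpow (by positivity) (by positivity), mul_rpow zero_le_two ht.le,
    ← rpow_natCast_mul hx.le, ht', ← hx']
  field_simp

theorem sq_mul_rpow_neg_half_mul_exp_le (c : ℝ) {t : ℝ} (ht : 0 < t) (x : ℝ) :
    (c * x * t ^ (-(1 : ℝ) / 2) * exp (-x ^ 2 / (4 * t))) ^ 2 ≤ 2 * c ^ 2 * exp (-1) := by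
  have h : (c * x * t ^ (-(1 : ℝ) / 2) * exp (-x ^ 2 / (4 * t))) ^ 2 =
      2 * c ^ 2 * (x ^ 2 / (2 * t) * exp (-(x ^ 2 / (2 * t)))) := by
    rw [mul_pow, sq_exp_neg_sq_div_four_mul, mul_pow, ← rpow_mul_natCast ht.le,
      show -(1 : ℝ) / 2 * (2 : ℕ) = -1 by norm_num, rpow_neg_one]
    field_simp
  have hv : x ^ 2 / (2 * t) * exp (-(x ^ 2 / (2 * t))) ≤ exp (-1) := by
    simpa using rpow_mul_exp_neg_le one_pos (by positivity : 0 ≤ x ^ 2 / (2 * t))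
  rw [h]
  gcongr

theorem sq_mul_rpow_neg_three_halves_mul_exp_le (c : ℝ) {t x : ℝ} (ht : 0 < t) (hx : 0 < x) :
    (c * x ^ 2 * t ^ (-(3 : ℝ) / 2) * exp (-x ^ 2 / (4 * t))) ^ 2 ≤
      2 ^ ((9 : ℝ) / 4) * c ^ 2 * ((9 / 4) ^ ((9 : ℝ) / 4) * exp (-(9 / 4))) *
        (t ^ (-(3 : ℝ) / 4) * x ^ (-(1 : ℝ) / 2)) := by
  set v := x ^ 2 / (2 * t)
  have hv := rpow_mul_exp_neg_le (by norm_num : (0 : ℝ) < 9 / 4) (by positivity : 0 ≤ v)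
  have h : (c * x ^ 2 * t ^ (-(3 : ℝ) / 2) * exp (-x ^ 2 / (4 * t))) ^ 2 =
      2 ^ ((9 : ℝ) / 4) * c ^ 2 * (v ^ ((9 : ℝ) / 4) * exp (-v)) *
        (t ^ (-(3 : ℝ) / 4) * x ^ (-(1 : ℝ) / 2)) := by
    rw [mul_pow, sq_exp_neg_sq_div_four_mul, mul_pow, ← rpow_mul_natCast ht.le,
      show -(3 : ℝ) / 2 * (2 : ℕ) = -3 by norm_num]
    linear_combination (c ^ 2 * exp (-v)) * pow_four_mul_rpow_neg_three ht hx
  rw [h]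
  gcongr

theorem stmt3 (T : ℝ) (hT : 0 < T) :
    IntegrableOn
      (fun q : ℝ × ℝ =>
        ((1 / (2 * Real.sqrt π)) * q.2 * q.1 ^ (-(1:ℝ)/2) * Real.exp (-q.2 ^ 2 / (4 * q.1))) ^ 2)
      (Ioo 0 T ×ˢ Ioo 0 1) volume
    ∧
    IntegrableOn
      (fun q : ℝ × ℝ =>
        ((1 / (2 * Real.sqrt π)) * q.2 ^ 2 * q.1 ^ (-(3:ℝ)/2) * Real.exp (-q.2 ^ 2 / (4 * q.1))) ^ 2)
      (Ioo 0 T ×ˢ Ioo 0 1) volume := by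
  set c := 1 / (2 * Real.sqrt π)
  set S := Ioo (0 : ℝ) T ×ˢ Ioo (0 : ℝ) 1
  have hS : MeasurableSet S := measurableSet_Ioo.prod measurableSet_Ioo
  have hS_fin : volume S ≠ ⊤ :=
    ((Metric.isBounded_Ioo 0 T).prod (Metric.isBounded_Ioo 0 1)).measure_lt_top.ne
  have hmeas (f : ℝ × ℝ → ℝ) (hf : ∀ q : ℝ × ℝ, q.1 ≠ 0 → ContinuousAt f q) :
      AEStronglyMeasurable f (volume.restrict S) :=
    ContinuousOn.aestronglyMeasurable (fun q hq => (hf q hq.1.1.ne').continuousWithinAt) hS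
  constructor
  · refine Integrable.mono' (integrableOn_const hS_fin (C := 2 * c ^ 2 * exp (-1)))
      (hmeas _ fun q hq => by fun_prop (disch := simp [hq])) ?_
    filter_upwards [ae_restrict_mem hS] with q hq
    rw [norm_of_nonneg (sq_nonneg _)]
    exact sq_mul_rpow_neg_half_mul_exp_le c hq.1.1 q.2
  · have hdom := (integrableOn_rpow_mul_rpow_Ioo_prod_Ioo (a := -(3 : ℝ) / 4) (b := -(1 : ℝ) / 2)
      (by norm_num) (by norm_num) hT one_pos).const_mul
        (2 ^ ((9 : ℝ) / 4) * c ^ 2 * ((9 / 4) ^ ((9 : ℝ) / 4) * exp (-(9 / 4))))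
    refine Integrable.mono' hdom (hmeas _ fun q hq => by fun_prop (disch := simp [hq])) ?_
    filter_upwards [ae_restrict_mem hS] with q hq
    rw [norm_of_nonneg (sq_nonneg _)]
    exact sq_mul_rpow_neg_three_halves_mul_exp_le c hq.1.1 hq.2.1
end

section
/- For any fixed x>0 and any k ∈ ℕ, the k-th derivative with respect to t of u_H(t,x) tends to 0 as t tends to 0 from above. -/
open MeasureTheory Real Set Filter Topology

/-- `u_H(t,x) = erfc(x/(2√t)) = (2/√π) ∫_{x/(2√t)}^∞ e^{-s²} ds`. -/
noncomputable def uH (t x : ℝ) : ℝ :=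
  (2 / Real.sqrt π) * ∫ s in Set.Ioi (x / (2 * Real.sqrt t)), Real.exp (-s ^ 2)

/-!
Substitute `v = (√t)⁻¹`, so that `u_H = erfc (x v / 2)` and `dv/dt = -v³/2`. The
`t`-derivative of `P(v) exp(-c v²)` is again of this form for another polynomial `P`, and the
first derivative of `u_H` has this form with `c = x²/4`; hence so does every derivative of
positive order.
As `t → 0⁺` we have `v → ∞`, where the Gaussian factor beats every polynomial. The function
itself is a Gaussian tail integral over `(x v / 2, ∞)`, which vanishes as `v → ∞`.
-/

open Polynomial

theorem hasDerivAt_integral_Ioi {E : Type*} [NormedAddCommGroup E] [NormedSpace ℝ E]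
    [CompleteSpace E] {f : ℝ → E} (hf : Integrable f) (hc : Continuous f) (a : ℝ) :
    HasDerivAt (fun b => ∫ s in Ioi b, f s) (-f a) a := by
  have hsplit : (fun b => ∫ s in Ioi b, f s) =
      fun b => (∫ s in Ioi 0, f s) - ∫ s in 0..b, f s := by
    funext b
    rw [eq_sub_iff_add_eq',
      intervalIntegral.integral_interval_add_Ioi hf.integrableOn hf.integrableOn]
  rw [hsplit, ← zero_sub]
  exact (hasDerivAt_const a _).sub (intervalIntegral.integral_hasDerivAt_right
    hf.intervalIntegrable (hc.stronglyMeasurableAtFilter _ _) hc.continuousAt)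

theorem hasDerivAt_inv_sqrt {t : ℝ} (ht : 0 < t) :
    HasDerivAt (fun t => (√t)⁻¹) (-((√t)⁻¹ ^ 3 / 2)) t := by
  have hs : √t ≠ 0 := (sqrt_pos.2 ht).ne'
  refine ((hasDerivAt_sqrt ht.ne').inv hs).congr_deriv ?_
  field_simp

theorem tendsto_inv_sqrt_nhdsGT_zero : Tendsto (fun t : ℝ => (√t)⁻¹) (𝓝[>] 0) atTop := by
  simpa only [Function.comp_def, sqrt_inv] using tendsto_sqrt_atTop.comp tendsto_inv_nhdsGT_zero

noncomputable def polyMulGaussian (c : ℝ) (P : ℝ[X]) (v : ℝ) : ℝ :=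
  P.eval v * exp (-(c * v ^ 2))

theorem hasDerivAt_polyMulGaussian (c : ℝ) (P : ℝ[X]) (v : ℝ) :
    HasDerivAt (polyMulGaussian c P)
      (polyMulGaussian c (derivative P - C (2 * c) * X * P) v) v := by
  refine ((P.hasDerivAt v).mul ((hasDerivAt_pow 2 v).const_mul c).neg.exp).congr_deriv ?_
  simp only [polyMulGaussian, eval_sub, eval_mul, eval_C, eval_X, Pi.neg_apply]
  ring

theorem tendsto_polyMulGaussian_atTop {c : ℝ} (hc : 0 < c) (P : ℝ[X]) :
    Tendsto (polyMulGaussian c P) atTop (𝓝 0) := by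
  unfold polyMulGaussian
  induction P using Polynomial.induction_on' with
  | add p q hp hq => simpa [add_mul] using hp.add hq
  | monomial n a =>
    have hpow : Tendsto (fun v : ℝ => v ^ (n : ℝ) * exp (-c * v ^ 2)) atTop (𝓝 0) :=
      (rpow_mul_exp_neg_mul_sq_isLittleO_exp_neg hc n).trans_tendsto
        (tendsto_exp_atBot.comp (tendsto_id.const_mul_atTop_of_neg (by norm_num)))
    simpa [mul_assoc] using hpow.const_mul a

theorem hasDerivAt_polyMulGaussian_inv_sqrt (c : ℝ) (P : ℝ[X]) {t : ℝ} (ht : 0 < t) :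
    HasDerivAt (fun t => polyMulGaussian c P (√t)⁻¹)
      (polyMulGaussian c (C (-1 / 2) * X ^ 3 * (derivative P - C (2 * c) * X * P)) (√t)⁻¹)
      t := by
  refine ((hasDerivAt_polyMulGaussian c P _).comp t (hasDerivAt_inv_sqrt ht)).congr_deriv ?_
  simp only [polyMulGaussian, eval_mul, eval_C, eval_pow, eval_X]
  ring

theorem exists_iteratedDeriv_succ_eqOn_polyMulGaussian {f : ℝ → ℝ} {c : ℝ} {P₀ : ℝ[X]}
    (hf : ∀ t > 0, HasDerivAt f (polyMulGaussian c P₀ (√t)⁻¹) t) (k : ℕ) :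
    ∃ P : ℝ[X],
      EqOn (iteratedDeriv (k + 1) f) (fun t => polyMulGaussian c P (√t)⁻¹) (Ioi 0) := by
  induction k with
  | zero => exact ⟨P₀, fun t ht => by rw [iteratedDeriv_one]; exact (hf t ht).deriv⟩
  | succ k ih =>
    obtain ⟨P, hP⟩ := ih
    refine ⟨C (-1 / 2) * X ^ 3 * (derivative P - C (2 * c) * X * P), fun t ht => ?_⟩
    rw [iteratedDeriv_succ, (hP.eventuallyEq_of_mem (Ioi_mem_nhds ht)).deriv_eq]
    exact (hasDerivAt_polyMulGaussian_inv_sqrt c P ht).deriv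

theorem uH_eq_integral_Ioi_mul_inv_sqrt (t x : ℝ) :
    uH t x = 2 / √π * ∫ s in Ioi (x / 2 * (√t)⁻¹), exp (-s ^ 2) := by
  rw [uH, div_mul_eq_div_div, div_eq_mul_inv (x / 2)]

theorem hasDerivAt_uH (x : ℝ) {t : ℝ} (ht : 0 < t) :
    HasDerivAt (fun s => uH s x)
      (polyMulGaussian (x ^ 2 / 4) (C (x / (2 * √π)) * X ^ 3) (√t)⁻¹) t := by
  have hgauss : Integrable fun s : ℝ => exp (-s ^ 2) := by
    simpa using integrable_exp_neg_mul_sq one_pos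
  simp only [uH_eq_integral_Ioi_mul_inv_sqrt]
  refine (((hasDerivAt_integral_Ioi hgauss (by fun_prop) _).comp t
    ((hasDerivAt_inv_sqrt ht).const_mul (x / 2))).const_mul (2 / √π)).congr_deriv ?_
  simp only [polyMulGaussian, eval_mul, eval_C, eval_pow, eval_X]
  rw [show (x / 2 * (√t)⁻¹) ^ 2 = x ^ 2 / 4 * (√t)⁻¹ ^ 2 by ring]
  field_simp

theorem stmt4 (x : ℝ) (hx : 0 < x) (k : ℕ) :
    Filter.Tendsto (fun t => iteratedDeriv k (fun s => uH s x) t)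
      (nhdsWithin 0 (Set.Ioi 0)) (nhds 0) := by
  cases k with
  | zero =>
    have h := (tendsto_integral_Ioi_zero (f := fun s => exp (-s ^ 2)) (μ := volume)
      (tendsto_inv_sqrt_nhdsGT_zero.const_mul_atTop (half_pos hx))).const_mul (2 / √π)
    simpa only [iteratedDeriv_zero, uH_eq_integral_Ioi_mul_inv_sqrt, mul_zero] using h
  | succ k =>
    obtain ⟨P, hP⟩ :=
      exists_iteratedDeriv_succ_eqOn_polyMulGaussian (fun _ => hasDerivAt_uH x) k
    exact ((tendsto_polyMulGaussian_atTop (by positivity) P).comp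
      tendsto_inv_sqrt_nhdsGT_zero).congr' (hP.eventuallyEq_of_mem self_mem_nhdsWithin).symm
end
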